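/- Fix real numbers α > 2, ρ_p > 0, c > 0, h > 0, and r_T ≥ 0. For each N > 0 let n = c·N, R_N = √(n/(π ρ_p)), and let X₁, X₂ be i.i.d. random points uniformly distributed on the closed disk of radius R_N centered at the origin in ℝ². Let 𝒜_N be the event that X₁ and X₂ both lie in the annulus {x ∈ ℝ² : r_T + 2h ≤ |x| ≤ R_N − h} and |X₁ − X₂| > 2h. Then for every real x > (π ρ_p/c)^{α/2}, lim_{N→∞} Pr( N^{α/2}|X₁|^{-α} > x and N^{α/2}|X₂|^{-α} > x | 𝒜_N ) = (π ρ_p/c)² · x^{-4/α}. -/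

import Mathlib

open MeasureTheory ProbabilityTheory Set Real Filter

/-- The uniform probability measure on the closed disk of radius `R` centered at the
origin of the plane. -/
noncomputable def unifDisk (R : ℝ) : Measure (EuclideanSpace ℝ (Fin 2)) :=
  (volume (Metric.closedBall (0 : EuclideanSpace ℝ (Fin 2)) R))⁻¹ •
    volume.restrict (Metric.closedBall (0 : EuclideanSpace ℝ (Fin 2)) R)

open Metric Topology

local notation "E2" => EuclideanSpace ℝ (Fin 2)

/-! Conditioning on an event whose probability tends to one does not change limits, since
`P(B | A) = P(A ∩ B) / P(A)` and `|P(A ∩ B) - P(B)| ≤ P(Aᶜ)`. Here `P(𝒜_Nᶜ) = O(1 / R_N)`: it is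
bounded by the relative areas of the inner disk of radius `r_T + 2h`, of the boundary strip of
width `h`, and of a disk of radius `2h` around the first point. Without conditioning, by
independence, the event asks both points to lie in the punctured disk of radius
`(N^{α/2} / x)^{1/α} = √N x^{-1/α}`, which has probability `((π ρ_p / c) x^{-2/α})²` for every
`N`. -/

theorem lt_mul_rpow_neg_iff {a t r α : ℝ} (ha : 0 < a) (ht : 0 < t) (hα : 0 < α) (hr : 0 ≤ r) :
    t < a * r ^ (-α) ↔ r ≠ 0 ∧ r < (a / t) ^ α⁻¹ := by
  rcases hr.eq_or_lt with rfl | hr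
  · simp [zero_rpow (neg_ne_zero.mpr hα.ne'), ht.le]
  · rw [rpow_neg hr.le, ← div_eq_mul_inv, lt_div_iff₀ (rpow_pos_of_pos hr α), mul_comm,
      ← lt_div_iff₀ ht, lt_rpow_inv_iff_of_pos hr.le (by positivity) hα]
    simp [hr.ne']

/-- `rpow` sends `0 ^ (-α)` to `0`, so the origin is not in the set. -/
theorem setOf_lt_mul_norm_rpow_neg {E : Type*} [NormedAddCommGroup E] {a t α : ℝ}
    (ha : 0 < a) (ht : 0 < t) (hα : 0 < α) :
    {v : E | t < a * ‖v‖ ^ (-α)} = ball 0 ((a / t) ^ α⁻¹) \ {0} := by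
  ext v
  simp [lt_mul_rpow_neg_iff ha ht hα (norm_nonneg v), and_comm]

theorem rpow_half_div_rpow_inv_sq {N x α : ℝ} (hN : 0 < N) (hx : 0 < x) (hα : α ≠ 0) :
    ((N ^ (α / 2) / x) ^ α⁻¹) ^ 2 = N * x ^ (-(2 / α)) := by
  rw [← rpow_natCast, ← rpow_mul (by positivity), div_rpow (by positivity) hx.le,
    ← rpow_mul hN.le, div_eq_mul_inv _ (x ^ _), ← rpow_neg hx.le]
  rw [show α / 2 * (α⁻¹ * (2 : ℕ)) = 1 by push_cast; field_simp, rpow_one, mul_comm α⁻¹,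
    ← div_eq_mul_inv]
  norm_num

theorem mul_rpow_neg_two_div_le_one {κ x α : ℝ} (hκ : 0 < κ) (hα : 0 < α)
    (hx : κ ^ (α / 2) < x) : κ * x ^ (-(2 / α)) ≤ 1 := by
  have hx0 : 0 < x := (rpow_pos_of_pos hκ _).trans hx
  have : κ < x ^ (2 / α) := by
    rw [← inv_div α 2]
    exact (lt_rpow_inv_iff_of_pos hκ.le hx0.le (by positivity)).mpr hx
  rw [rpow_neg hx0.le, ← div_eq_mul_inv, div_le_one (by positivity)]
  exact this.le

theorem mul_rpow_neg_two_div_sq {κ x α : ℝ} (hx : 0 ≤ x) :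
    (κ * x ^ (-(2 / α))) ^ 2 = κ ^ 2 * x ^ (-4 / α) := by
  rw [mul_pow, ← rpow_natCast (x ^ _), ← rpow_mul hx]
  congr 2
  push_cast
  ring

theorem tendsto_sqrt_mul_div_atTop {c κ : ℝ} (hc : 0 < c) (hκ : 0 < κ) :
    Tendsto (fun N => √(c * N / κ)) atTop atTop :=
  tendsto_sqrt_atTop.comp ((tendsto_id.const_mul_atTop hc).atTop_div_const hκ)

theorem tendsto_annulus_pair_bound (a h d : ℝ) :
    Tendsto (fun R : ℝ => 2 * ((a / R) ^ 2 + (1 - ((R - h) / R) ^ 2)) + (d / R) ^ 2) atTop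
      (𝓝 0) := by
  have hg : Tendsto (fun u : ℝ => 2 * ((a * u) ^ 2 + (1 - (1 - h * u) ^ 2)) + (d * u) ^ 2)
      (𝓝 0) (𝓝 0) := by
    simpa using ((by fun_prop : Continuous
      fun u : ℝ => 2 * ((a * u) ^ 2 + (1 - (1 - h * u) ^ 2)) + (d * u) ^ 2).tendsto 0)
  refine (hg.comp tendsto_inv_atTop_zero).congr' ?_
  filter_upwards [eventually_ne_atTop 0] with R hR
  simp only [Function.comp_apply]
  field_simp

theorem tendsto_cond_of_tendsto_measureReal_compl {ι : Type*} {l : Filter ι}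
    {Ω : ι → Type*} [∀ i, MeasurableSpace (Ω i)] {P : ∀ i, Measure (Ω i)}
    [∀ i, IsProbabilityMeasure (P i)] {A B : ∀ i, Set (Ω i)} {L : ℝ}
    (hA : ∀ i, MeasurableSet (A i)) (hAc : Tendsto (fun i => (P i).real (A i)ᶜ) l (𝓝 0))
    (hB : Tendsto (fun i => (P i).real (B i)) l (𝓝 L)) :
    Tendsto (fun i => ((P i)[|A i] (B i)).toReal) l (𝓝 L) := by
  have hcond : ∀ i, ((P i)[|A i] (B i)).toReal = (P i).real (A i ∩ B i) / (P i).real (A i) :=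
    fun i => by
      rw [cond_apply (hA i), ENNReal.toReal_mul, ENNReal.toReal_inv, inv_mul_eq_div]; rfl
  have hinter : Tendsto (fun i => (P i).real (A i ∩ B i)) l (𝓝 L) := by
    refine tendsto_of_tendsto_of_tendsto_of_le_of_le (by simpa using hB.sub hAc) hB
      (fun i => ?_) (fun i => measureReal_mono inter_subset_right)
    have : B i ⊆ (A i ∩ B i) ∪ (A i)ᶜ := fun ω hω => by by_cases h : ω ∈ A i <;> simp [*]
    linarith [(measureReal_mono (μ := P i) this).trans (measureReal_union_le _ _)]
  have hAone : Tendsto (fun i => (P i).real (A i)) l (𝓝 1) := by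
    simpa [probReal_compl_eq_one_sub (hA _)] using (tendsto_const_nhds (x := (1:ℝ))).sub hAc
  rw [show (fun i => ((P i)[|A i] (B i)).toReal) = _ from funext hcond, ← div_one L]
  exact hinter.div hAone one_ne_zero

section UnifDisk

variable {R : ℝ}

theorem unifDisk_apply_le (s : Set E2) :
    unifDisk R s ≤ volume s / volume (closedBall (0 : E2) R) := by
  rw [unifDisk, Measure.smul_apply, smul_eq_mul, ENNReal.div_eq_inv_mul]
  exact mul_le_mul_right (Measure.restrict_apply_le _ _) _

theorem unifDisk_apply_of_subset {s : Set E2} (hs : s ⊆ closedBall 0 R) :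
    unifDisk R s = volume s / volume (closedBall (0 : E2) R) := by
  rw [unifDisk, Measure.smul_apply, smul_eq_mul, ENNReal.div_eq_inv_mul,
    Measure.restrict_apply' measurableSet_closedBall, inter_eq_left.mpr hs]

theorem volume_closedBall_div_volume_closedBall (hR : 0 < R) {r : ℝ} (hr : 0 ≤ r) (v w : E2) :
    volume (closedBall v r) / volume (closedBall w R) = ENNReal.ofReal ((r / R) ^ 2) := by
  rw [EuclideanSpace.volume_closedBall_fin_two, EuclideanSpace.volume_closedBall_fin_two,
    ENNReal.mul_div_mul_right _ _ (by simp [pi_pos]) ENNReal.ofReal_ne_top,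
    ENNReal.ofReal_pow (by positivity), ENNReal.ofReal_div_of_pos hR, div_eq_mul_inv,
    div_eq_mul_inv, mul_pow, ENNReal.inv_pow]

theorem isProbabilityMeasure_unifDisk (hR : 0 < R) : IsProbabilityMeasure (unifDisk R) := by
  constructor
  rw [unifDisk, Measure.smul_apply, Measure.restrict_apply_univ, smul_eq_mul,
    ENNReal.inv_mul_cancel (measure_closedBall_pos volume 0 hR).ne' measure_closedBall_lt_top.ne]

theorem unifDisk_closedBall_le (hR : 0 < R) {r : ℝ} (hr : 0 ≤ r) (v : E2) :
    unifDisk R (closedBall v r) ≤ ENNReal.ofReal ((r / R) ^ 2) :=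
  (unifDisk_apply_le _).trans (volume_closedBall_div_volume_closedBall hR hr v 0).le

theorem unifDisk_real_closedBall (hR : 0 < R) {r : ℝ} (hr : 0 ≤ r) (hrR : r ≤ R) :
    (unifDisk R).real (closedBall 0 r) = (r / R) ^ 2 := by
  rw [measureReal_def, unifDisk_apply_of_subset (closedBall_subset_closedBall hrR),
    volume_closedBall_div_volume_closedBall hR hr, ENNReal.toReal_ofReal (by positivity)]

theorem unifDisk_real_ball_diff_zero (hR : 0 < R) {r : ℝ} (hr : 0 ≤ r) (hrR : r ≤ R) :
    (unifDisk R).real (ball 0 r \ {0}) = (r / R) ^ 2 := by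
  rw [measureReal_def, unifDisk_apply_of_subset
      (sdiff_subset.trans (ball_subset_closedBall.trans (closedBall_subset_closedBall hrR))),
    measure_sdiff_null (measure_singleton 0), ← Measure.addHaar_closedBall_eq_addHaar_ball,
    volume_closedBall_div_volume_closedBall hR hr, ENNReal.toReal_ofReal (by positivity)]

theorem unifDisk_real_compl_annulus_le (hR : 0 < R) {a b : ℝ} (ha : 0 ≤ a) (haR : a ≤ R)
    (hb : 0 ≤ b) (hbR : b ≤ R) :
    (unifDisk R).real {v | a ≤ ‖v‖ ∧ ‖v‖ ≤ b}ᶜ ≤ (a / R) ^ 2 + (1 - (b / R) ^ 2) := by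
  have := isProbabilityMeasure_unifDisk hR
  have hsub : {v : E2 | a ≤ ‖v‖ ∧ ‖v‖ ≤ b}ᶜ ⊆ closedBall 0 a ∪ (closedBall 0 b)ᶜ := by
    intro v hv
    simp only [mem_compl_iff, mem_ofPred_eq, mem_union, mem_closedBall, dist_zero_right] at hv ⊢
    by_contra! h
    exact hv ⟨h.1.le, h.2⟩
  calc (unifDisk R).real {v | a ≤ ‖v‖ ∧ ‖v‖ ≤ b}ᶜ
      ≤ (unifDisk R).real (closedBall 0 a) + (unifDisk R).real (closedBall 0 b)ᶜ :=
        (measureReal_mono hsub).trans (measureReal_union_le _ _)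
    _ = (a / R) ^ 2 + (1 - (b / R) ^ 2) := by
      rw [probReal_compl_eq_one_sub measurableSet_closedBall, unifDisk_real_closedBall hR ha haR,
        unifDisk_real_closedBall hR hb hbR]

theorem unifDisk_prod_real_dist_le (hR : 0 < R) {d : ℝ} (hd : 0 ≤ d) :
    ((unifDisk R).prod (unifDisk R)).real {p | dist p.1 p.2 ≤ d} ≤ (d / R) ^ 2 := by
  have := isProbabilityMeasure_unifDisk hR
  refine ENNReal.toReal_le_of_le_ofReal (by positivity) ?_
  rw [Measure.prod_apply (measurableSet_le (measurable_fst.dist measurable_snd) measurable_const)]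
  calc ∫⁻ v, unifDisk R (Prod.mk v ⁻¹' {p | dist p.1 p.2 ≤ d}) ∂unifDisk R
      ≤ ∫⁻ _, ENNReal.ofReal ((d / R) ^ 2) ∂unifDisk R := lintegral_mono fun v => by
        rw [show Prod.mk v ⁻¹' {p : E2 × E2 | dist p.1 p.2 ≤ d} = closedBall v d by
          ext; simp [dist_comm]]
        exact unifDisk_closedBall_le hR hd v
    _ = ENNReal.ofReal ((d / R) ^ 2) := by simp

end UnifDisk

section IdentDistribPair

variable {Ω E : Type*} [MeasurableSpace Ω] [MeasurableSpace E] {P : Measure Ω} {μ : Measure E}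
  {X Y : Ω → E}

theorem measureReal_preimage_le_map_measureReal [IsFiniteMeasure P] {f : Ω → E}
    (hf : AEMeasurable f P) (s : Set E) : P.real (f ⁻¹' s) ≤ (P.map f).real s :=
  ENNReal.toReal_mono (measure_ne_top _ _) (Measure.le_map_apply hf s)

theorem IndepFun.measureReal_inter_preimage_of_map_eq (hX : Measurable X) (hY : Measurable Y)
    (hXY : IndepFun X Y P) (hlawX : P.map X = μ) (hlawY : P.map Y = μ) {S : Set E}
    (hS : MeasurableSet S) : P.real (X ⁻¹' S ∩ Y ⁻¹' S) = μ.real S ^ 2 := by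
  rw [measureReal_def, hXY.measure_inter_preimage_eq_mul _ _ hS hS, ENNReal.toReal_mul,
    ← measureReal_def, ← measureReal_def, ← map_measureReal_apply hX hS,
    ← map_measureReal_apply hY hS, hlawX, hlawY, sq]

theorem IndepFun.measureReal_compl_mem_mem_lt_dist_le [IsFiniteMeasure P] [PseudoMetricSpace E]
    (hX : Measurable X) (hY : Measurable Y) (hXY : IndepFun X Y P) (hlawX : P.map X = μ)
    (hlawY : P.map Y = μ) (T : Set E) (d : ℝ) :
    P.real {ω | X ω ∈ T ∧ Y ω ∈ T ∧ d < dist (X ω) (Y ω)}ᶜ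
      ≤ 2 * μ.real Tᶜ + (μ.prod μ).real {p | dist p.1 p.2 ≤ d} := by
  have hlawXY : P.map (fun ω => (X ω, Y ω)) = μ.prod μ := by
    rw [(indepFun_iff_map_prod_eq_prod_map_map hX.aemeasurable hY.aemeasurable).mp hXY, hlawX,
      hlawY]
  have hsub : {ω | X ω ∈ T ∧ Y ω ∈ T ∧ d < dist (X ω) (Y ω)}ᶜ
      ⊆ X ⁻¹' Tᶜ ∪ (Y ⁻¹' Tᶜ ∪ (fun ω => (X ω, Y ω)) ⁻¹' {p | dist p.1 p.2 ≤ d}) := by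
    intro ω hω
    simp only [mem_compl_iff, mem_ofPred_eq, not_and, not_lt] at hω
    simp only [mem_union, mem_preimage, mem_compl_iff, mem_ofPred_eq]
    tauto
  have hX' := hlawX ▸ measureReal_preimage_le_map_measureReal hX.aemeasurable Tᶜ
  have hY' := hlawY ▸ measureReal_preimage_le_map_measureReal hY.aemeasurable Tᶜ
  have hXY' := hlawXY ▸ measureReal_preimage_le_map_measureReal
    (hX.prodMk hY).aemeasurable {p : E × E | dist p.1 p.2 ≤ d}
  calc _ ≤ _ := measureReal_mono hsub
    _ ≤ _ := (measureReal_union_le _ _).trans (add_le_add_right (measureReal_union_le _ _) _)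
    _ ≤ _ := by linarith

end IdentDistribPair

section UnifDiskPair

variable {Ω : Type*} [MeasurableSpace Ω] {P : Measure Ω} {X Y : Ω → E2} {R : ℝ}

theorem IndepFun.measureReal_compl_annulus_pair_le [IsFiniteMeasure P] (hX : Measurable X)
    (hY : Measurable Y) (hXY : IndepFun X Y P) (hlawX : P.map X = unifDisk R)
    (hlawY : P.map Y = unifDisk R) (hR : 0 < R) {a b d : ℝ} (ha : 0 ≤ a) (haR : a ≤ R)
    (hb : 0 ≤ b) (hbR : b ≤ R) (hd : 0 ≤ d) :
    P.real {ω | (a ≤ ‖X ω‖ ∧ ‖X ω‖ ≤ b) ∧ (a ≤ ‖Y ω‖ ∧ ‖Y ω‖ ≤ b) ∧ d < dist (X ω) (Y ω)}ᶜ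
      ≤ 2 * ((a / R) ^ 2 + (1 - (b / R) ^ 2)) + (d / R) ^ 2 :=
  (IndepFun.measureReal_compl_mem_mem_lt_dist_le hX hY hXY hlawX hlawY
    {v | a ≤ ‖v‖ ∧ ‖v‖ ≤ b} d).trans <| add_le_add
      (mul_le_mul_of_nonneg_left (unifDisk_real_compl_annulus_le hR ha haR hb hbR) zero_le_two)
      (unifDisk_prod_real_dist_le hR hd)

theorem IndepFun.measureReal_lt_mul_norm_rpow_neg_pair (hX : Measurable X) (hY : Measurable Y)
    (hXY : IndepFun X Y P) (hlawX : P.map X = unifDisk R) (hlawY : P.map Y = unifDisk R)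
    {a t α : ℝ} (ha : 0 < a) (ht : 0 < t) (hα : 0 < α) (hR : (a / t) ^ α⁻¹ ≤ R) :
    P.real {ω | t < a * ‖X ω‖ ^ (-α) ∧ t < a * ‖Y ω‖ ^ (-α)} = (((a / t) ^ α⁻¹ / R) ^ 2) ^ 2 := by
  have hr : 0 < (a / t) ^ α⁻¹ := by positivity
  have hS := setOf_lt_mul_norm_rpow_neg (E := E2) ha ht hα
  refine (IndepFun.measureReal_inter_preimage_of_map_eq hX hY hXY hlawX hlawY
    (hS ▸ measurableSet_ball.diff (measurableSet_singleton 0))).trans ?_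
  rw [hS, unifDisk_real_ball_diff_zero (hr.trans_le hR) hr.le hR]

end UnifDiskPair

/-- Lemma 4 of the paper.  Fix `α > 2`, `ρ_p > 0`, `c > 0`, `h > 0`,
`r_T ≥ 0`.  For each `N > 0` let `R_N = √(cN/(π ρ_p))` and `X₁, X₂` i.i.d. uniform on the
closed disk of radius `R_N`; `𝒜_N` is the event that both lie in the annulus
`{x : r_T + 2h ≤ |x| ≤ R_N − h}` and `|X₁ − X₂| > 2h`.  Then for every
`x > (π ρ_p/c)^(α/2)`,
`Pr(N^(α/2)|X₁|^{-α} > x ∧ N^(α/2)|X₂|^{-α} > x | 𝒜_N) → (π ρ_p/c)²·x^{-4/α}`. -/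
theorem stmt17 (α ρp c h rT : ℝ) (hα : 2 < α) (hρp : 0 < ρp) (hc : 0 < c)
    (hh : 0 < h) (hrT : 0 ≤ rT)
    (R : ℝ → ℝ) (hRdef : ∀ N : ℝ, R N = Real.sqrt (c * N / (π * ρp)))
    (Ω : ℝ → Type) [∀ N, MeasurableSpace (Ω N)]
    (P : (N : ℝ) → Measure (Ω N)) (hprob : ∀ N, IsProbabilityMeasure (P N))
    (X Y : (N : ℝ) → Ω N → EuclideanSpace ℝ (Fin 2))
    (hmeasX : ∀ N, Measurable (X N)) (hmeasY : ∀ N, Measurable (Y N))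
    (hindep : ∀ N : ℝ, 0 < N → IndepFun (X N) (Y N) (P N))
    (hlawX : ∀ N : ℝ, 0 < N → (P N).map (X N) = unifDisk (R N))
    (hlawY : ∀ N : ℝ, 0 < N → (P N).map (Y N) = unifDisk (R N))
    (x : ℝ) (hx : (π * ρp / c) ^ (α / 2) < x) :
    Tendsto
      (fun N : ℝ =>
        (((P N)[|{ω | (rT + 2 * h ≤ ‖X N ω‖ ∧ ‖X N ω‖ ≤ R N - h) ∧
            (rT + 2 * h ≤ ‖Y N ω‖ ∧ ‖Y N ω‖ ≤ R N - h) ∧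
            2 * h < dist (X N ω) (Y N ω)}])
          {ω | x < N ^ (α / 2) * ‖X N ω‖ ^ (-α) ∧
            x < N ^ (α / 2) * ‖Y N ω‖ ^ (-α)}).toReal)
      atTop (nhds ((π * ρp / c) ^ 2 * x ^ (-4 / α))) := by
  have := hprob
  have hα0 : 0 < α := by linarith
  have hx0 : 0 < x := (rpow_pos_of_pos (by positivity) _).trans hx
  have hR : Tendsto R atTop atTop :=
    (tendsto_sqrt_mul_div_atTop hc (by positivity)).congr fun N => (hRdef N).symm
  rw [← mul_rpow_neg_two_div_sq hx0.le]
  refine tendsto_cond_of_tendsto_measureReal_compl (fun N => by measurability) ?_ ?_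
  · refine squeeze_zero' (.of_forall fun N => measureReal_nonneg) ?_
      ((tendsto_annulus_pair_bound (rT + 2 * h) h (2 * h)).comp hR)
    filter_upwards [hR.eventually_ge_atTop (rT + 3 * h), eventually_gt_atTop 0] with N hRN hN
    exact IndepFun.measureReal_compl_annulus_pair_le (hmeasX N) (hmeasY N) (hindep N hN)
      (hlawX N hN) (hlawY N hN) (by linarith) (by positivity) (by linarith) (by linarith)
      (by linarith) (by positivity)
  · refine tendsto_const_nhds.congr' ?_
    filter_upwards [eventually_gt_atTop 0] with N hN
    have hR0 : 0 < R N := by rw [hRdef]; positivity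
    have hr : ((N ^ (α / 2) / x) ^ α⁻¹ / R N) ^ 2 = π * ρp / c * x ^ (-(2 / α)) := by
      rw [div_pow, rpow_half_div_rpow_inv_sq hN hx0 hα0.ne', hRdef, sq_sqrt (by positivity)]
      field_simp
    have hrR : (N ^ (α / 2) / x) ^ α⁻¹ ≤ R N := by
      rw [← div_le_one hR0, ← pow_le_one_iff_of_nonneg (by positivity) two_ne_zero, hr]
      exact mul_rpow_neg_two_div_le_one (by positivity) hα0 hx
    rw [IndepFun.measureReal_lt_mul_norm_rpow_neg_pair (hmeasX N) (hmeasY N) (hindep N hN)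
      (hlawX N hN) (hlawY N hN) (rpow_pos_of_pos hN _) hx0 hα0 hrR, hr]
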